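/- Suppose that at least one of the following holds, where N_k(ω) := ω̂(k + [0,1)^d) for k ∈ ℤ^d: (i) for 𝒫-a.a. ω there exists C(ω) > 0 with sup_{k∈ℤ^d} N_k(ω) ≤ C(ω); or (ii) E[N₀²] < ∞ and there exist C₀ ≥ 0 (and α > 0 if d = 1) such that Cov(N_k, N_{k′}) ≤ C₀|k−k′|^{−1} for d ≥ 2 and Cov(N_k, N_{k′}) ≤ C₀|k−k′|^{−1−α} for d = 1, for all k ≠ k′ in ℤ^d. Fix a weakly decreasing function ψ : [0,∞) → [0,∞) such that x ↦ ψ(|x|) is Riemann integrable on ℝ^d. Then 𝒫-almost surely, lim_{ℓ→∞} limsup_{ε↓0} ∫ dμ^ε_ω(x) ψ(|x|) 1_{{|x| ≥ ℓ}} = 0. -/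

import Mathlib

open MeasureTheory Filter Topology ENNReal

noncomputable section

namespace RWMPP

/-- Points of `ℝ^d`. -/
abbrev Pt (d : ℕ) := Fin d → ℝ

/-- Euclidean norm on `ℝ^d`. -/
def ptNorm {d : ℕ} (x : Pt d) : ℝ := Real.sqrt (∑ i, x i ^ 2)

/-- Configurations: counting measures on `ℝ^d × S` (marked point configurations are
identified with the associated counting measures). -/
abbrev Cfg (d : ℕ) (S : Type*) [MeasurableSpace S] := MeasureTheory.Measure (Pt d × S)

variable {d : ℕ} {S : Type*} [MeasurableSpace S]

/-- Translation `τ_x ω = {(x_i - x, s_i)}`. -/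
def shift (x : Pt d) (ω : Cfg d S) : Cfg d S := ω.map fun p => (p.1 - x, p.2)

/-- The spatial support `ω̂`, as a counting measure on `ℝ^d`. -/
def hat (ω : Cfg d S) : Measure (Pt d) := ω.map Prod.fst

/-- `x ∈ ω̂`. -/
def inSupp (ω : Cfg d S) (x : Pt d) : Prop := hat ω {x} ≠ 0

/-- `ω` is a locally finite simple marked configuration (at most one mark per point). -/
def IsConfig (ω : Cfg d S) : Prop :=
  ∃ X : Set (Pt d × S), X.Countable ∧ Set.InjOn Prod.fst X ∧
    (∀ r : ℝ, (X ∩ {p | ptNorm p.1 ≤ r}).Finite) ∧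
    ω = Measure.sum fun p : X => Measure.dirac (p : Pt d × S)

/-- The unit cube `[0,1]^d`. -/
def unitCube (d : ℕ) : Set (Pt d) := {x | ∀ i, 0 ≤ x i ∧ x i ≤ 1}

/-- The basic setting: a stationary ergodic marked simple point process `P` with
finite positive intensity (assumptions (A1), (A2)), its Palm distribution `P0`
(characterized by the Campbell-type identity `palm`), and nonnegative measurable
jump rates `c`. -/
structure Setting (d : ℕ) (S : Type*) [MeasurableSpace S] [TopologicalSpace S]
    [PolishSpace S] [BorelSpace S] where
  P : Measure (Cfg d S)
  P0 : Measure (Cfg d S)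
  c : Pt d → Pt d → Cfg d S → ℝ
  isProb : IsProbabilityMeasure P
  isProb0 : IsProbabilityMeasure P0
  config_ae : ∀ᵐ ω ∂P, IsConfig ω
  stationary : ∀ x : Pt d, P.map (shift x) = P
  ergodic : ∀ A : Set (Cfg d S), MeasurableSet A → (∀ x : Pt d, shift x ⁻¹' A = A) →
    P A = 0 ∨ P A = 1
  c_nonneg : ∀ x y ω, 0 ≤ c x y ω
  c_meas : Measurable fun q : Pt d × Pt d × Cfg d S => c q.1 q.2.1 q.2.2
  intensity_pos : 0 < ∫⁻ ω, hat ω (unitCube d) ∂P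
  intensity_ne_top : (∫⁻ ω, hat ω (unitCube d) ∂P) ≠ ⊤
  palm : ∀ A : Set (Cfg d S), MeasurableSet A →
    (∫⁻ ω, hat ω (unitCube d) ∂P) * P0 A =
      ∫⁻ ω, ∫⁻ x in unitCube d, A.indicator (fun _ => (1 : ℝ≥0∞)) (shift x ω) ∂hat ω ∂P
  palm_supp : ∀ᵐ ω ∂P0, inSupp ω 0

variable [TopologicalSpace S] [PolishSpace S] [BorelSpace S]

/-- The intensity `m`. -/
def Setting.intensity (E : Setting d S) : ℝ := (∫⁻ ω, hat ω (unitCube d) ∂E.P).toReal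

/-- `λ_k(ω) = ∫ dω̂(x) c_{0,x}(ω) |x|^k`. -/
def Setting.lambdaFn (E : Setting d S) (k : ℕ) (ω : Cfg d S) : ℝ :=
  ∫ x, E.c 0 x ω * ptNorm x ^ k ∂hat ω

/-- `F_*(ω) = ∫dω̂(y) ∫dω̂(z) c_{0,y}(ω) c_{y,z}(ω)`. -/
def Setting.Fstar (E : Setting d S) (ω : Cfg d S) : ℝ :=
  ∫ y, ∫ z, E.c 0 y ω * E.c y z ω ∂hat ω ∂hat ω

/-- Assumption (A3). -/
def A3 (E : Setting d S) : Prop := ∀ᵐ ω ∂E.P, ∀ x y : Pt d,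
  inSupp ω x → inSupp ω y → x ≠ y → shift x ω ≠ shift y ω

/-- Assumption (A4): symmetry and covariance of the rates. -/
def A4 (E : Setting d S) : Prop :=
  (∀ ω x y, inSupp ω x → inSupp ω y → E.c x y ω = E.c y x ω) ∧
  ∀ ω x y (a : Pt d), inSupp ω x → inSupp ω y → E.c x y ω = E.c (x - a) (y - a) (shift a ω)

/-- Assumption (A5): `λ₀, λ₁ ∈ L²(P₀)`, `λ₂ ∈ L¹(P₀)`. -/
def A5 (E : Setting d S) : Prop :=
  MemLp (E.lambdaFn 0) 2 E.P0 ∧ MemLp (E.lambdaFn 1) 2 E.P0 ∧ Integrable (E.lambdaFn 2) E.P0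

/-- Assumption (A6): `F_* ∈ L¹(P₀)`. -/
def A6 (E : Setting d S) : Prop := Integrable E.Fstar E.P0

/-- Assumption (A7): a.s. irreducibility of the rates on `ω̂`. -/
def A7 (E : Setting d S) : Prop := ∀ᵐ ω ∂E.P, ∀ x y : Pt d, inSupp ω x → inSupp ω y →
  ∃ (n : ℕ) (γ : Fin (n + 1) → Pt d), γ 0 = x ∧ γ (Fin.last n) = y ∧
    (∀ i, inSupp ω (γ i)) ∧ ∀ i : Fin n, 0 < E.c (γ i.castSucc) (γ i.succ) ω

/-- The microscopic measure `μ^ε_ω = ε^d Σ_{a∈ω̂} δ_{εa}`. -/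
def muEps (ω : Cfg d S) (ε : ℝ) : Measure (Pt d) :=
  ENNReal.ofReal (ε ^ d) • (hat ω).map fun a => ε • a

/-- The microscopic measure `ν^ε_ω = ε^d Σ_{a,b∈ω̂} c_{a,b}(ω) δ_{(εa, b-a)}`. -/
def nuEps (c : Pt d → Pt d → Cfg d S → ℝ) (ω : Cfg d S) (ε : ℝ) : Measure (Pt d × Pt d) :=
  ENNReal.ofReal (ε ^ d) •
    ((((hat ω).prod (hat ω)).withDensity fun q => ENNReal.ofReal (c q.1 q.2 ω)).map
      fun q => (ε • q.1, q.2 - q.1))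

/-- The microscopic gradient `∇_ε v (x,z) = (v(x+εz) - v(x))/ε`. -/
def gradEps {d : ℕ} (ε : ℝ) (v : Pt d → ℝ) (q : Pt d × Pt d) : ℝ :=
  (v (q.1 + ε • q.2) - v q.1) / ε

/-- `v ∈ H¹_{ω,ε}`. -/
def MemH1 (c : Pt d → Pt d → Cfg d S → ℝ) (ω : Cfg d S) (ε : ℝ) (v : Pt d → ℝ) : Prop :=
  MemLp v 2 (muEps ω ε) ∧ MemLp (gradEps ε v) 2 (nuEps c ω ε)

/-- Weak convergence of a family `v_ε ∈ L²(μ^ε_ω)` to `v ∈ L²(m dx)`. -/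
structure WeakConv (m : ℝ) (ω : Cfg d S) (v : ℝ → Pt d → ℝ) (vlim : Pt d → ℝ) : Prop where
  mem : ∀ᶠ ε in 𝓝[>] (0 : ℝ), MemLp (v ε) 2 (muEps ω ε)
  bdd : ∃ C : ℝ, ∀ᶠ ε in 𝓝[>] (0 : ℝ), ∫ x, v ε x ^ 2 ∂muEps ω ε ≤ C
  tendsto : ∀ φ : Pt d → ℝ, Continuous φ → HasCompactSupport φ →
    Tendsto (fun ε => ∫ x, v ε x * φ x ∂muEps ω ε) (𝓝[>] (0 : ℝ))
      (𝓝 (m * ∫ x, vlim x * φ x))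

/-- Strong convergence of a family `v_ε ∈ L²(μ^ε_ω)` to `v ∈ L²(m dx)`. -/
structure StrongConv (m : ℝ) (ω : Cfg d S) (v : ℝ → Pt d → ℝ) (vlim : Pt d → ℝ) : Prop where
  mem : ∀ᶠ ε in 𝓝[>] (0 : ℝ), MemLp (v ε) 2 (muEps ω ε)
  bdd : ∃ C : ℝ, ∀ᶠ ε in 𝓝[>] (0 : ℝ), ∫ x, v ε x ^ 2 ∂muEps ω ε ≤ C
  tendsto : ∀ (g : ℝ → Pt d → ℝ) (glim : Pt d → ℝ), WeakConv m ω g glim →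
    Tendsto (fun ε => ∫ x, v ε x * g ε x ∂muEps ω ε) (𝓝[>] (0 : ℝ))
      (𝓝 (m * ∫ x, vlim x * glim x))

/-- Euclidean scalar product. -/
def dotv {d : ℕ} (a b : Pt d) : ℝ := ∑ i, a i * b i

/-- The variational formula `a ↦ a · D a` for the effective diffusion matrix. -/
def Setting.Dform (E : Setting d S) (a : Pt d) : ℝ :=
  sInf {r : ℝ | ∃ f : Cfg d S → ℝ, Measurable f ∧ (∃ M : ℝ, ∀ ω, |f ω| ≤ M) ∧
    r = (1 / 2) * ∫ ω, (∫ x, E.c 0 x ω * (dotv a x - (f (shift x ω) - f ω)) ^ 2 ∂hat ω) ∂E.P0}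

/-- The `i`-th canonical basis vector. -/
def unitVec (d : ℕ) (i : Fin d) : Pt d := fun j => if j = i then 1 else 0

/-- `D` is the effective diffusion matrix and the coordinates are chosen so that
`e₁, …, e_{d*}` span the positive eigenspaces of `D` and the remaining coordinates
span its kernel. -/
structure IsEffMatrix (E : Setting d S) (D : Matrix (Fin d) (Fin d) ℝ) (dstar : ℕ) : Prop where
  symm : D.IsSymm
  quad : ∀ a : Pt d, dotv a (D.mulVec a) = E.Dform a
  dstar_le : dstar ≤ d
  ker : ∀ i : Fin d, dstar ≤ i.val → D.mulVec (unitVec d i) = 0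
  pos : ∀ a : Pt d, (∀ i : Fin d, dstar ≤ i.val → a i = 0) → a ≠ 0 → 0 < dotv a (D.mulVec a)

/-- `u ∈ H¹_*(m dx)` with `∇_* u = gu` (weak partial derivatives in the first
`d*` coordinates, the remaining components vanishing). -/
def IsStarGradient (dstar : ℕ) (u : Pt d → ℝ) (gu : Pt d → Pt d) : Prop :=
  MemLp u 2 (volume : Measure (Pt d)) ∧ MemLp gu 2 (volume : Measure (Pt d)) ∧
  (∀ x, ∀ i : Fin d, dstar ≤ i.val → gu x i = 0) ∧
  ∀ i : Fin d, i.val < dstar → ∀ φ : Pt d → ℝ, ContDiff ℝ (⊤ : ℕ∞) φ → HasCompactSupport φ →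
    ∫ x, u x * fderiv ℝ φ x (unitVec d i) = -∫ x, gu x i * φ x

/-- Weak solution `u ∈ H¹_*(m dx)` of `-∇_*·D∇_* u + λ u = f`. -/
def IsEffWeakSol (D : Matrix (Fin d) (Fin d) ℝ) (dstar : ℕ) (lam : ℝ)
    (f u : Pt d → ℝ) (gu : Pt d → Pt d) : Prop :=
  IsStarGradient dstar u gu ∧
  ∀ (v : Pt d → ℝ) (gv : Pt d → Pt d), IsStarGradient dstar v gv →
    (∫ x, dotv (D.mulVec (gu x)) (gv x)) + lam * ∫ x, u x * v x = ∫ x, f x * v x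

/-- Weak solution `u ∈ H¹_{ω,ε}` of `-𝕃^ε_ω u + λ u = f`. -/
def IsEpsWeakSol (c : Pt d → Pt d → Cfg d S → ℝ) (ω : Cfg d S) (ε lam : ℝ)
    (f u : Pt d → ℝ) : Prop :=
  MemH1 c ω ε u ∧
  ∀ v : Pt d → ℝ, MemH1 c ω ε v →
    (1 / 2) * (∫ q, gradEps ε v q * gradEps ε u q ∂nuEps c ω ε) +
      lam * ∫ x, v x * u x ∂muEps ω ε = ∫ x, v x * f x ∂muEps ω ε

/-- `∇_* φ` for a differentiable `φ`. -/
def gradStar (dstar : ℕ) (φ : Pt d → ℝ) (x : Pt d) : Pt d :=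
  fun i => if i.val < dstar then fderiv ℝ φ x (unitVec d i) else 0

/-- Weak convergence of the flows `∇_ε v_ε` to `w`. -/
structure WeakFlowConv (m : ℝ) (D : Matrix (Fin d) (Fin d) ℝ) (dstar : ℕ)
    (c : Pt d → Pt d → Cfg d S → ℝ) (ω : Cfg d S)
    (v : ℝ → Pt d → ℝ) (w : Pt d → Pt d) : Prop where
  bdd : ∃ C : ℝ, ∀ᶠ ε in 𝓝[>] (0 : ℝ), ∫ q, gradEps ε (v ε) q ^ 2 ∂nuEps c ω ε ≤ C
  tendsto : ∀ φ : Pt d → ℝ, ContDiff ℝ 1 φ → HasCompactSupport φ →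
    Tendsto (fun ε => (1 / 2) * ∫ q, gradEps ε (v ε) q * gradEps ε φ q ∂nuEps c ω ε)
      (𝓝[>] (0 : ℝ)) (𝓝 (m * ∫ x, dotv (D.mulVec (w x)) (gradStar dstar φ x)))

/-- Strong convergence of the flows `∇_ε v_ε` to `w`. -/
structure StrongFlowConv (m : ℝ) (D : Matrix (Fin d) (Fin d) ℝ) (dstar : ℕ)
    (c : Pt d → Pt d → Cfg d S → ℝ) (ω : Cfg d S)
    (v : ℝ → Pt d → ℝ) (w : Pt d → Pt d) : Prop where
  bdd : ∃ C : ℝ, ∀ᶠ ε in 𝓝[>] (0 : ℝ), ∫ q, gradEps ε (v ε) q ^ 2 ∂nuEps c ω ε ≤ C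
  tendsto : ∀ (g : ℝ → Pt d → ℝ) (glim : Pt d → ℝ) (gg : Pt d → Pt d),
    (∀ ε, 0 < ε → MemH1 c ω ε (g ε)) → WeakConv m ω g glim → IsStarGradient dstar glim gg →
    Tendsto (fun ε => (1 / 2) * ∫ q, gradEps ε (v ε) q * gradEps ε (g ε) q ∂nuEps c ω ε)
      (𝓝[>] (0 : ℝ)) (𝓝 (m * ∫ x, dotv (D.mulVec (w x)) (gg x)))

/-- The generator `𝕃^ε_ω` evaluated at a point `εa` of `εω̂`. -/
def genEps (c : Pt d → Pt d → Cfg d S → ℝ) (ω : Cfg d S) (ε : ℝ)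
    (f : Pt d → ℝ) (a : Pt d) : ℝ :=
  (ε ^ 2)⁻¹ * ∫ y, c a y ω * (f (ε • y) - f (ε • a)) ∂hat ω

/-- `P` is the Markov semigroup `e^{t𝕃^ε_ω}` of the random walk on `εω̂` with jump
rates `ε^{-2} c_{y,z}(ω)` (characterized by the semigroup property, contractivity and
the Kolmogorov equation). -/
structure IsRWSemigroup (c : Pt d → Pt d → Cfg d S → ℝ) (ω : Cfg d S) (ε : ℝ)
    (P : ℝ → (Pt d → ℝ) → Pt d → ℝ) : Prop where
  init : ∀ f, P 0 f = f
  meas : ∀ t, 0 ≤ t → ∀ f : Pt d → ℝ, Measurable f → Measurable (P t f)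
  contraction : ∀ (f : Pt d → ℝ) (M : ℝ), (∀ x, |f x| ≤ M) → ∀ t, 0 ≤ t → ∀ x, |P t f x| ≤ M
  semigroup : ∀ s t : ℝ, 0 ≤ s → 0 ≤ t → ∀ f : Pt d → ℝ, Measurable f → (∃ M, ∀ x, |f x| ≤ M) →
    ∀ a : Pt d, inSupp ω a → P (s + t) f (ε • a) = P s (P t f) (ε • a)
  kolmogorov : ∀ f : Pt d → ℝ, Measurable f → (∃ M, ∀ x, |f x| ≤ M) →
    ∀ a : Pt d, inSupp ω a → ∀ t : ℝ, 0 < t →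
      HasDerivAt (fun s => P s f (ε • a)) (genEps c ω ε (P t f) a) t

/-- Gaussian transition kernel (as a function of the increment) of Brownian motion on
`ℝ^n` with (nondegenerate) diffusion matrix `A`. -/
def gaussKernel (n : ℕ) (A : Matrix (Fin n) (Fin n) ℝ) (t : ℝ) (z : Pt n) : ℝ :=
  (Real.sqrt ((2 * Real.pi * t) ^ n * A.det))⁻¹ *
    Real.exp (-dotv z (A⁻¹.mulVec z) / (2 * t))

/-- Inclusion of `ℝ^{d*}` into the first `d*` coordinates of `ℝ^d`. -/
def inclStar {d : ℕ} (dstar : ℕ) (z : Pt dstar) : Pt d :=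
  fun i => if h : i.val < dstar then z ⟨i.val, h⟩ else 0

/-- The effective semigroup `P_t` of the (possibly degenerate) Brownian motion with
diffusion matrix `2D`: `P_t f(x',x'') = ∫ p_t(x',y) f(y,x'') dy`. -/
def effSemigroup (D : Matrix (Fin d) (Fin d) ℝ) (dstar : ℕ) (h : dstar ≤ d)
    (t : ℝ) (f : Pt d → ℝ) (x : Pt d) : ℝ :=
  ∫ z : Pt dstar,
    gaussKernel dstar (Matrix.of fun i j => 2 * D (Fin.castLE h i) (Fin.castLE h j)) t z *
      f (x + inclStar dstar z)

/-- The measure `ν` on `Ω₀ × ℝ^d`: `∫ g dν = ∫ dP₀(ω) ∫ dω̂(z) c_{0,z}(ω) g(ω,z)`. -/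
def nuMeas (E : Setting d S) : Measure (Cfg d S × Pt d) :=
  E.P0.bind fun ω => ((hat ω).withDensity fun z => ENNReal.ofReal (E.c 0 z ω)).map fun z => (ω, z)

/-- The gradient `∇u(ω,z) = u(τ_z ω) - u(ω)`. -/
def gradP (u : Cfg d S → ℝ) (q : Cfg d S × Pt d) : ℝ := u (shift q.2 q.1) - u q.1

/-- The divergence of a square integrable form. -/
def Setting.divP (E : Setting d S) (v : Cfg d S × Pt d → ℝ) (ω : Cfg d S) : ℝ :=
  ∫ z, E.c 0 z ω * (v (ω, z) - v (shift z ω, -z)) ∂hat ω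

/-- `v ∈ L²_pot(ν)`: `v` lies in the `L²(ν)`-closure of gradients of bounded Borel
functions. -/
def IsPotForm (E : Setting d S) (v : Cfg d S × Pt d → ℝ) : Prop :=
  MemLp v 2 (nuMeas E) ∧ ∀ δ : ℝ, 0 < δ → ∃ u : Cfg d S → ℝ, Measurable u ∧
    (∃ M : ℝ, ∀ ω, |u ω| ≤ M) ∧
    eLpNorm (fun q => v q - gradP u q) 2 (nuMeas E) < ENNReal.ofReal δ

/-- `b ∈ L²_sol(ν) = L²_pot(ν)^⊥`. -/
def IsSolForm (E : Setting d S) (b : Cfg d S × Pt d → ℝ) : Prop :=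
  MemLp b 2 (nuMeas E) ∧ ∀ v, IsPotForm E v → ∫ q, b q * v q ∂nuMeas E = 0

/-- The quadratic form `q(a) = inf_{v ∈ L²_pot(ν)} ½∫(a·z + v)² dν`. -/
def Setting.qForm (E : Setting d S) (a : Pt d) : ℝ :=
  sInf {r : ℝ | ∃ v, IsPotForm E v ∧ r = (1 / 2) * ∫ q, (dotv a q.2 + v q) ^ 2 ∂nuMeas E}

/-- `η_b = ∫ dν(ω,z) b(ω,z) z`. -/
def etaOf (E : Setting d S) (b : Cfg d S × Pt d → ℝ) : Pt d :=
  fun i => ∫ q, b q * q.2 i ∂nuMeas E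

open Classical in
/-- The transformation `b̃(ω,z) = b(τ_z ω, -z)` for `z ∈ ω̂`, `0` otherwise. -/
def tildeF (b : Cfg d S × Pt d → ℝ) (q : Cfg d S × Pt d) : ℝ :=
  if inSupp q.1 q.2 then b (shift q.2 q.1, -q.2) else 0

/-- The cube `k + [0,1)^d` for `k ∈ ℤ^d`. -/
def zcube {d : ℕ} (k : Fin d → ℤ) : Set (Pt d) := {x | ∀ i, (k i : ℝ) ≤ x i ∧ x i < (k i : ℝ) + 1}

/-- `N_k(ω) = ω̂(k + [0,1)^d)`, as a real number. -/
def NkR (ω : Cfg d S) (k : Fin d → ℤ) : ℝ := (hat ω (zcube k)).toReal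

/-- The covariance `Cov(N_k, N_{k'})` under `P`. -/
def covN (E : Setting d S) (k k' : Fin d → ℤ) : ℝ :=
  (∫ ω, NkR ω k * NkR ω k' ∂E.P) - (∫ ω, NkR ω k ∂E.P) * ∫ ω, NkR ω k' ∂E.P

/-- Euclidean distance on `ℤ^d`. -/
def zdist {d : ℕ} (k k' : Fin d → ℤ) : ℝ := Real.sqrt (∑ i, ((k i - k' i : ℤ) : ℝ) ^ 2)

/-- Condition (i): a.s. uniformly bounded cube counts. -/
def CondI (E : Setting d S) : Prop :=
  ∀ᵐ ω ∂E.P, ∃ C : ℝ≥0∞, C ≠ ⊤ ∧ ∀ k : Fin d → ℤ, hat ω (zcube k) ≤ C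

/-- Condition (ii): `E[N₀²] < ∞` and polynomial decay of covariances of cube counts. -/
def CondII (E : Setting d S) : Prop :=
  (∫⁻ ω, hat ω (zcube (0 : Fin d → ℤ)) ^ 2 ∂E.P) ≠ ⊤ ∧
  ∃ C₀ : ℝ, 0 ≤ C₀ ∧ ∃ α : ℝ, (d = 1 → 0 < α) ∧
    ∀ k k' : Fin d → ℤ, k ≠ k' →
      covN E k k' ≤ if 2 ≤ d then C₀ / zdist k k' else C₀ * zdist k k' ^ (-(1 + α))

/-- The state space of the exclusion process. -/
abbrev EtaSp (d : ℕ) := Pt d → Bool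

open Classical in
/-- The configuration `η^{x,y}` obtained from `η` by exchanging the values at `x,y`. -/
def swapEta (x y : Pt d) (η : EtaSp d) : EtaSp d :=
  fun z => if z = x then η y else if z = y then η x else η z

/-- `η_x ∈ {0,1}` as a real number. -/
def indEta {d : ℕ} (η : EtaSp d) (x : Pt d) : ℝ := if η x then 1 else 0

/-- The exclusion generator
`ℒ_ω f(η) = Σ_{x,y∈ω̂} c_{x,y}(ω) η_x(1-η_y)[f(η^{x,y}) - f(η)]`. -/
def exclGen (c : Pt d → Pt d → Cfg d S → ℝ) (ω : Cfg d S)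
    (f : EtaSp d → ℝ) (η : EtaSp d) : ℝ :=
  ∫ x, ∫ y, c x y ω * indEta η x * (1 - indEta η y) * (f (swapEta x y η) - f η) ∂hat ω ∂hat ω

/-- Bounded measurable local (cylinder) functions on the exclusion state space. -/
def IsLocalFn {d : ℕ} (f : EtaSp d → ℝ) : Prop :=
  Measurable f ∧ (∃ M, ∀ η, |f η| ≤ M) ∧
  ∃ F : Finset (Pt d), ∀ η η' : EtaSp d, (∀ x ∈ F, η x = η' x) → f η = f η'

/-- `Q t` is the time-`t` distribution of the exclusion process on `ω̂` with jump rates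
`c_{x,y}(ω)` and initial distribution `init` (characterized by the Kolmogorov
forward equations on local functions). -/
structure IsExclusionEvolution (c : Pt d → Pt d → Cfg d S → ℝ) (ω : Cfg d S)
    (init : Measure (EtaSp d)) (Q : ℝ → Measure (EtaSp d)) : Prop where
  prob : ∀ t : ℝ, 0 ≤ t → IsProbabilityMeasure (Q t)
  init_eq : Q 0 = init
  forward : ∀ f : EtaSp d → ℝ, IsLocalFn f → ∀ t : ℝ, 0 < t →
    HasDerivAt (fun s => ∫ η, f η ∂Q s) (∫ η, exclGen c ω f η ∂Q t) t

/-- The empirical density field `ε^d Σ_{x∈ω̂} φ(εx) η_x`. -/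
def empirical (ω : Cfg d S) (ε : ℝ) (φ : Pt d → ℝ) (η : EtaSp d) : ℝ :=
  ε ^ d * ∫ x, φ (ε • x) * indEta η x ∂hat ω

/-- The spatial support `ω̂` is, under `P`, a Poisson point process on `ℝ^d` with
intensity `m`: Poisson counts and independence over disjoint sets. -/
def IsPoissonPP (E : Setting d S) (m : ℝ) : Prop :=
  (∀ A : Set (Pt d), MeasurableSet A → volume A ≠ ⊤ → ∀ n : ℕ,
      E.P {ω | hat ω A = n} =
        ENNReal.ofReal (Real.exp (-(m * (volume A).toReal)) *
          (m * (volume A).toReal) ^ n / n.factorial)) ∧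
  ∀ (k : ℕ) (A : Fin k → Set (Pt d)), (∀ i, MeasurableSet (A i)) →
    Pairwise (Function.onFun Disjoint A) →
    ProbabilityTheory.iIndepFun (fun i ω => hat ω (A i)) E.P

end RWMPP
namespace RWMPP

section Aux
variable {d : ℕ} {S : Type*} [MeasurableSpace S]

lemma ptNorm_nonneg (x : Pt d) : 0 ≤ ptNorm x := Real.sqrt_nonneg _

lemma continuous_ptNorm : Continuous (ptNorm (d := d)) := by
  unfold ptNorm; fun_prop

lemma measurable_ptNorm : Measurable (ptNorm (d := d)) := continuous_ptNorm.measurable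

lemma abs_coord_le_ptNorm (x : Pt d) (i : Fin d) : |x i| ≤ ptNorm x := by
  rw [ptNorm, ← Real.sqrt_sq_eq_abs]
  exact Real.sqrt_le_sqrt (Finset.single_le_sum (f := fun j => x j ^ 2)
    (fun j _ => sq_nonneg _) (Finset.mem_univ i))

lemma ptNorm_smul {ε : ℝ} (hε : 0 ≤ ε) (a : Pt d) : ptNorm (ε • a) = ε * ptNorm a := by
  unfold ptNorm
  have h1 : ∑ i, (ε • a) i ^ 2 = ε ^ 2 * ∑ i, a i ^ 2 := by
    rw [Finset.mul_sum]
    refine Finset.sum_congr rfl fun i _ => ?_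
    simp [Pi.smul_apply, smul_eq_mul]; ring
  rw [h1, Real.sqrt_mul (sq_nonneg ε), Real.sqrt_sq hε]

lemma measurable_g {ψ : ℝ → ℝ} (hψa : ∀ a b : ℝ, 0 ≤ a → a ≤ b → ψ b ≤ ψ a) :
    Measurable fun x : Pt d => ENNReal.ofReal (ψ (ptNorm x)) := by
  have h : Antitone fun r : ℝ => ψ (max r 0) := fun a b hab =>
    hψa _ _ (le_max_right a 0) (max_le_max hab le_rfl)
  have : (fun x : Pt d => ENNReal.ofReal (ψ (ptNorm x)))
      = fun x => ENNReal.ofReal (ψ (max (ptNorm x) 0)) := by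
    funext x; rw [max_eq_left (ptNorm_nonneg x)]
  rw [this]
  exact ENNReal.measurable_ofReal.comp (h.measurable.comp measurable_ptNorm)

lemma exists_dyadic {L t : ℝ} (hL : 0 < L) (h : L ≤ t) :
    ∃ j : ℕ, 2 ^ j * L ≤ t ∧ t < 2 ^ (j + 1) * L := by
  have hu1 : (1 : ℝ) ≤ t / L := (one_le_div hL).2 h
  set u := t / L with hu
  have hfl1 : 1 ≤ ⌊u⌋₊ := Nat.le_floor (by exact_mod_cast hu1)
  have htu : t = u * L := by rw [hu, div_mul_cancel₀ t hL.ne']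
  refine ⟨Nat.log 2 ⌊u⌋₊, ?_, ?_⟩
  · have h1 : (2 ^ Nat.log 2 ⌊u⌋₊ : ℕ) ≤ ⌊u⌋₊ := Nat.pow_log_le_self 2 (by omega)
    have h2 : (⌊u⌋₊ : ℝ) ≤ u := Nat.floor_le (le_trans zero_le_one hu1)
    have h3 : (2:ℝ) ^ Nat.log 2 ⌊u⌋₊ ≤ u := le_trans (by exact_mod_cast h1) h2
    rw [htu]; nlinarith
  · have h1 : ⌊u⌋₊ < 2 ^ (Nat.log 2 ⌊u⌋₊ + 1) := Nat.lt_pow_succ_log_self (by norm_num) _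
    have h2 : u < (⌊u⌋₊ : ℝ) + 1 := Nat.lt_floor_add_one u
    have h3 : u < 2 ^ (Nat.log 2 ⌊u⌋₊ + 1) := by
      have : (⌊u⌋₊ : ℝ) + 1 ≤ 2 ^ (Nat.log 2 ⌊u⌋₊ + 1) := by exact_mod_cast Nat.succ_le_of_lt h1
      linarith
    rw [htu]; nlinarith

/-- Deterministic tightness estimate given a polynomial bound on ball counts. -/
lemma lemmaA (hd : 0 < d) (ν : Measure (Pt d)) {C : ℝ} (hC0 : 0 ≤ C)
    (hball : ∀ R : ℝ, 1 ≤ R → ν {x | ptNorm x ≤ R} ≤ ENNReal.ofReal (C * R ^ d))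
    (ψ : ℝ → ℝ) (hψ0 : ∀ r, 0 ≤ ψ r) (hψa : ∀ a b : ℝ, 0 ≤ a → a ≤ b → ψ b ≤ ψ a)
    (hψi : Integrable (fun x : Pt d => ψ (ptNorm x)) (volume : Measure (Pt d))) :
    Tendsto (fun ℓ : ℕ =>
        Filter.limsup (fun ε => ∫⁻ x in {x : Pt d | (ℓ : ℝ) ≤ ptNorm x},
          ENNReal.ofReal (ψ (ptNorm x)) ∂(ENNReal.ofReal (ε ^ d) • ν.map (fun a => ε • a)))
        (𝓝[>] (0:ℝ))) atTop (𝓝 0) := by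
  set g : Pt d → ℝ≥0∞ := fun x => ENNReal.ofReal (ψ (ptNorm x)) with hg_def
  have hg : Measurable g := measurable_g hψa
  have hsd : (0:ℝ) < Real.sqrt d := Real.sqrt_pos.2 (by exact_mod_cast hd)
  have hsq : Real.sqrt d ^ 2 = (d:ℝ) := Real.sq_sqrt (by positivity)
  set K : ℝ≥0∞ := ENNReal.ofReal (C * 2 ^ d * (2 * Real.sqrt d) ^ d) with hK_def
  set T : ℕ → ℝ≥0∞ := fun ℓ => ∫⁻ x in {x : Pt d | (ℓ:ℝ)/2 ≤ ptNorm x}, g x with hT_def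
  -- the key uniform bound
  have key : ∀ ℓ : ℕ, 1 ≤ ℓ → ∀ ε : ℝ, ε ∈ Set.Ioc (0:ℝ) 1 →
      (∫⁻ x in {x : Pt d | (ℓ : ℝ) ≤ ptNorm x},
        g x ∂(ENNReal.ofReal (ε ^ d) • ν.map (fun a => ε • a))) ≤ K * T ℓ := by
    intro ℓ hℓ ε hε
    obtain ⟨hε0, hε1⟩ := hε
    have hℓR : (1:ℝ) ≤ (ℓ:ℝ) := by exact_mod_cast hℓ
    have hℓ0 : (0:ℝ) < (ℓ:ℝ) := lt_of_lt_of_le one_pos hℓR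
    have hsmeas : MeasurableSet {x : Pt d | (ℓ : ℝ) ≤ ptNorm x} :=
      measurableSet_le measurable_const measurable_ptNorm
    have hmap : Measurable fun a : Pt d => ε • a := by fun_prop
    -- reduce to an integral over ν
    rw [Measure.restrict_smul, lintegral_smul_measure, setLIntegral_map hsmeas hg hmap]
    -- the dyadic annuli
    set Sj : ℕ → Set (Pt d) := fun j =>
      {a | 2 ^ j * (ℓ:ℝ) ≤ ε * ptNorm a ∧ ε * ptNorm a < 2 ^ (j+1) * (ℓ:ℝ)} with hSj_def
    -- the comparison boxes
    set B : ℕ → Set (Pt d) := fun j => Set.univ.pi (fun _ : Fin d =>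
      Set.Ico (2 ^ j * (ℓ:ℝ) / (2 * Real.sqrt d)) (2 ^ j * (ℓ:ℝ) / Real.sqrt d)) with hB_def
    have hsub : ((fun a : Pt d => ε • a) ⁻¹' {x | (ℓ : ℝ) ≤ ptNorm x}) ⊆ ⋃ j, Sj j := by
      intro a ha
      have : (ℓ:ℝ) ≤ ε * ptNorm a := by
        simpa [ptNorm_smul hε0.le] using ha
      obtain ⟨j, h1, h2⟩ := exists_dyadic hℓ0 this
      exact Set.mem_iUnion.2 ⟨j, h1, h2⟩
    have step1 : ∫⁻ a in (fun a : Pt d => ε • a) ⁻¹' {x | (ℓ : ℝ) ≤ ptNorm x}, g (ε • a) ∂ν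
        ≤ ∑' j, ∫⁻ a in Sj j, g (ε • a) ∂ν :=
      le_trans (lintegral_mono_set hsub) (lintegral_iUnion_le _ _)
    -- bound each annulus integral
    have step2 : ∀ j : ℕ, ∫⁻ a in Sj j, g (ε • a) ∂ν ≤
        ENNReal.ofReal (ψ (2 ^ j * (ℓ:ℝ))) *
          ENNReal.ofReal (C * (2 ^ (j+1) * (ℓ:ℝ) / ε) ^ d) := by
      intro j
      have hrj : (0:ℝ) < 2 ^ j * (ℓ:ℝ) := by positivity
      have hbd : ∫⁻ a in Sj j, g (ε • a) ∂ν
          ≤ ∫⁻ _ in Sj j, ENNReal.ofReal (ψ (2 ^ j * (ℓ:ℝ))) ∂ν := by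
        refine setLIntegral_mono measurable_const fun a ha => ?_
        rw [hg_def]
        simp only [ptNorm_smul hε0.le]
        exact ENNReal.ofReal_le_ofReal (hψa _ _ hrj.le ha.1)
      rw [setLIntegral_const] at hbd
      refine le_trans hbd (mul_le_mul_right ?_ _)
      have hsub2 : Sj j ⊆ {x : Pt d | ptNorm x ≤ 2 ^ (j+1) * (ℓ:ℝ) / ε} := by
        intro a ha
        exact (le_div_iff₀ hε0).2 (by rw [mul_comm]; exact ha.2.le)
      refine le_trans (measure_mono hsub2) (hball _ ?_)
      have h2j : (1:ℝ) ≤ 2 ^ (j+1) * (ℓ:ℝ) := by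
        have : (1:ℝ) ≤ 2 ^ (j+1) := one_le_pow₀ (by norm_num)
        nlinarith
      rw [le_div_iff₀ hε0]
      nlinarith
    -- multiply by ε^d and compare with the box integrals
    have step3 : ∀ j : ℕ, ENNReal.ofReal (ε ^ d) *
        (ENNReal.ofReal (ψ (2 ^ j * (ℓ:ℝ))) *
          ENNReal.ofReal (C * (2 ^ (j+1) * (ℓ:ℝ) / ε) ^ d))
        ≤ K * ∫⁻ x in B j, g x := by
      intro j
      have hrj : (0:ℝ) < 2 ^ j * (ℓ:ℝ) := by positivity
      set rj : ℝ := 2 ^ j * (ℓ:ℝ) with hrj_def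
      -- volume of the box
      have hvol : volume (B j) = ENNReal.ofReal ((rj / (2 * Real.sqrt d)) ^ d) := by
        rw [hB_def]
        simp only
        rw [volume_pi_pi]
        have hlen : rj / Real.sqrt d - rj / (2 * Real.sqrt d) = rj / (2 * Real.sqrt d) := by
          field_simp; ring
        simp only [Real.volume_Ico, ← hrj_def, hlen, Finset.prod_const, Finset.card_univ,
          Fintype.card_fin]
        exact (ENNReal.ofReal_pow (by positivity) _).symm
      -- pointwise lower bound of g on the box
      have hgbd : ∀ x ∈ B j, ENNReal.ofReal (ψ rj) ≤ g x := by
        intro x hx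
        have hcoord : ∀ i : Fin d, rj / (2 * Real.sqrt d) ≤ x i ∧ x i < rj / Real.sqrt d :=
          fun i => hx i (Set.mem_univ i)
        have hub : ptNorm x ≤ rj := by
          rw [ptNorm, ← Real.sqrt_sq hrj.le]
          refine Real.sqrt_le_sqrt ?_
          have hterm : ∀ i : Fin d, x i ^ 2 ≤ rj ^ 2 / d := by
            intro i
            have h1 := (hcoord i).1
            have h2 := (hcoord i).2
            have hx0 : 0 ≤ x i := le_trans (by positivity) h1
            have hm := mul_self_le_mul_self hx0 h2.le
            calc x i ^ 2 = x i * x i := pow_two _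
              _ ≤ (rj / Real.sqrt d) * (rj / Real.sqrt d) := hm
              _ = rj ^ 2 / d := by rw [div_mul_div_comm, ← pow_two, ← pow_two, hsq]
          calc ∑ i, x i ^ 2 ≤ ∑ _i : Fin d, rj ^ 2 / d :=
                Finset.sum_le_sum fun i _ => hterm i
            _ = rj ^ 2 := by
                rw [Finset.sum_const, Finset.card_univ, Fintype.card_fin, nsmul_eq_mul]
                field_simp
        exact ENNReal.ofReal_le_ofReal (hψa _ _ (ptNorm_nonneg x) hub)
      have hlow : ENNReal.ofReal (ψ rj) * volume (B j) ≤ ∫⁻ x in B j, g x := by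
        rw [← setLIntegral_const]
        exact setLIntegral_mono hg hgbd
      -- arithmetic
      have harith : ε ^ d * (ψ rj * (C * (2 ^ (j+1) * (ℓ:ℝ) / ε) ^ d))
          = (C * 2 ^ d * (2 * Real.sqrt d) ^ d) * (ψ rj * (rj / (2 * Real.sqrt d)) ^ d) := by
        have h2 : (2:ℝ) ^ (j+1) * (ℓ:ℝ) = 2 * rj := by rw [hrj_def]; ring
        rw [h2, div_pow, div_pow, mul_pow, mul_pow]
        field_simp
      calc ENNReal.ofReal (ε ^ d) * (ENNReal.ofReal (ψ rj)
            * ENNReal.ofReal (C * (2 ^ (j+1) * (ℓ:ℝ) / ε) ^ d))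
          = ENNReal.ofReal (ε ^ d * (ψ rj * (C * (2 ^ (j+1) * (ℓ:ℝ) / ε) ^ d))) := by
            rw [← ENNReal.ofReal_mul (hψ0 _), ← ENNReal.ofReal_mul (by positivity :
              (0:ℝ) ≤ ε ^ d)]
        _ = K * ENNReal.ofReal (ψ rj * (rj / (2 * Real.sqrt d)) ^ d) := by
            rw [harith, hK_def, ← ENNReal.ofReal_mul (by positivity)]
        _ = K * (ENNReal.ofReal (ψ rj) * ENNReal.ofReal ((rj / (2 * Real.sqrt d)) ^ d)) := by
            rw [← ENNReal.ofReal_mul (hψ0 _)]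
        _ = K * (ENNReal.ofReal (ψ rj) * volume (B j)) := by rw [hvol]
        _ ≤ K * ∫⁻ x in B j, g x := mul_le_mul_right hlow _
    have hBmeas : ∀ j : ℕ, MeasurableSet (B j) :=
      fun j => MeasurableSet.univ_pi fun i => measurableSet_Ico
    have hBdisj : Pairwise (Function.onFun Disjoint B) := by
      have hmono : ∀ j j' : ℕ, j < j' → ∀ x : Pt d, x ∈ B j → x ∉ B j' := by
        intro j j' hjj' x hx hx'
        let i0 : Fin d := ⟨0, hd⟩
        have h1 := (hx i0 (Set.mem_univ _)).2
        have h2 := (hx' i0 (Set.mem_univ _)).1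
        have hstep : 2 ^ j * (ℓ:ℝ) / Real.sqrt d ≤ 2 ^ j' * (ℓ:ℝ) / (2 * Real.sqrt d) := by
          rw [div_le_div_iff₀ (by positivity) (by positivity)]
          have h2j : 2 * (2:ℝ) ^ j ≤ 2 ^ j' := by
            calc 2 * (2:ℝ)^j = 2^(j+1) := by ring
              _ ≤ 2^j' := pow_le_pow_right₀ (by norm_num) (by omega)
          have hmul := mul_le_mul_of_nonneg_right h2j
            (by positivity : (0:ℝ) ≤ (ℓ:ℝ) * Real.sqrt d)
          nlinarith [hmul]
        linarith
      intro j j' hne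
      rcases lt_or_gt_of_ne hne with h | h
      · exact Set.disjoint_left.2 fun x hx hx' => hmono j j' h x hx hx'
      · exact Set.disjoint_right.2 fun x hx hx' => hmono j' j h x hx hx'
    have hBsub : ∀ j : ℕ, B j ⊆ {x : Pt d | (ℓ:ℝ)/2 ≤ ptNorm x} := by
      intro j x hx
      have hrj : (0:ℝ) < 2 ^ j * (ℓ:ℝ) := by positivity
      set rj : ℝ := 2 ^ j * (ℓ:ℝ) with hrj_def
      have hhalf : (rj / (2 * Real.sqrt d))^2 = rj^2/(4*(d:ℝ)) := by
        have h4 : (2 * Real.sqrt d)^2 = 4*(d:ℝ) := by rw [mul_pow, hsq]; norm_num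
        rw [div_pow, h4]
      have hlow : rj / 2 ≤ ptNorm x := by
        have hterm : ∀ i : Fin d, rj ^ 2 / (4*(d:ℝ)) ≤ x i ^ 2 := by
          intro i
          have h1 := (hx i (Set.mem_univ i)).1
          have hx0 : (0:ℝ) ≤ rj / (2 * Real.sqrt d) := by positivity
          have hm := mul_self_le_mul_self hx0 h1
          calc rj ^ 2 / (4*(d:ℝ)) = (rj / (2 * Real.sqrt d)) * (rj / (2 * Real.sqrt d)) := by
                rw [← pow_two, hhalf]
            _ ≤ x i * x i := hm
            _ = x i ^ 2 := (pow_two _).symm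
        have hsum : rj ^ 2 / 4 ≤ ∑ i, x i ^ 2 := by
          calc rj^2/4 = ∑ _i : Fin d, rj ^ 2 / (4*(d:ℝ)) := by
                rw [Finset.sum_const, Finset.card_univ, Fintype.card_fin, nsmul_eq_mul]
                have hd0 : (d:ℝ) ≠ 0 := by positivity
                field_simp
            _ ≤ ∑ i, x i ^ 2 := Finset.sum_le_sum fun i _ => hterm i
        calc rj/2 = Real.sqrt (rj^2/4) := by
              rw [show rj^2/4 = (rj/2)^2 by ring, Real.sqrt_sq (by positivity)]
          _ ≤ ptNorm x := Real.sqrt_le_sqrt hsum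
      have h0 : (ℓ:ℝ)/2 ≤ rj/2 := by
        have : (1:ℝ) ≤ 2 ^ j := one_le_pow₀ (by norm_num)
        rw [hrj_def]; nlinarith
      exact le_trans h0 hlow
    -- assemble
    calc ENNReal.ofReal (ε ^ d)
          * ∫⁻ a in (fun a : Pt d => ε • a) ⁻¹' {x | (ℓ : ℝ) ≤ ptNorm x}, g (ε • a) ∂ν
        ≤ ENNReal.ofReal (ε ^ d) * ∑' j, ∫⁻ a in Sj j, g (ε • a) ∂ν :=
          mul_le_mul_right step1 _
      _ = ∑' j, ENNReal.ofReal (ε ^ d) * ∫⁻ a in Sj j, g (ε • a) ∂ν :=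
          ENNReal.tsum_mul_left.symm
      _ ≤ ∑' j, K * ∫⁻ x in B j, g x :=
          ENNReal.tsum_le_tsum fun j =>
            le_trans (mul_le_mul_right (step2 j) _) (step3 j)
      _ = K * ∑' j, ∫⁻ x in B j, g x := ENNReal.tsum_mul_left
      _ = K * ∫⁻ x in ⋃ j, B j, g x := by rw [lintegral_iUnion hBmeas hBdisj]
      _ ≤ K * T ℓ := mul_le_mul_right (lintegral_mono_set (Set.iUnion_subset hBsub)) _
  -- limit in ℓ
  have hKne : K ≠ ⊤ := ENNReal.ofReal_ne_top
  have hTtend : Tendsto T atTop (𝓝 0) := by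
    set μψ := (volume : Measure (Pt d)).withDensity g with hμψ
    have hmeasset : ∀ ℓ : ℕ, MeasurableSet {x : Pt d | (ℓ:ℝ)/2 ≤ ptNorm x} :=
      fun ℓ => measurableSet_le measurable_const measurable_ptNorm
    have hTeq : ∀ ℓ : ℕ, T ℓ = μψ {x : Pt d | (ℓ:ℝ)/2 ≤ ptNorm x} := by
      intro ℓ
      rw [hμψ, withDensity_apply _ (hmeasset ℓ)]
    have hanti : Antitone fun ℓ : ℕ => {x : Pt d | (ℓ:ℝ)/2 ≤ ptNorm x} := by
      intro a b hab x hx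
      have hc : (a:ℝ) ≤ (b:ℝ) := by exact_mod_cast hab
      have h2 : (a:ℝ)/2 ≤ (b:ℝ)/2 := by linarith
      exact le_trans h2 hx
    have hfin : μψ {x : Pt d | ((0:ℕ):ℝ)/2 ≤ ptNorm x} ≠ ⊤ := by
      refine ne_of_lt (lt_of_le_of_lt (measure_mono (Set.subset_univ _)) ?_)
      rw [hμψ, withDensity_apply _ MeasurableSet.univ, setLIntegral_univ]
      exact hψi.lintegral_lt_top
    have hempty : ⋂ ℓ : ℕ, {x : Pt d | (ℓ:ℝ)/2 ≤ ptNorm x} = ∅ := by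
      ext x
      simp only [Set.mem_iInter, Set.mem_setOf_eq, Set.mem_empty_iff_false, iff_false, not_forall,
        not_le]
      obtain ⟨n, hn⟩ := exists_nat_gt (2 * ptNorm x)
      exact ⟨n, by linarith⟩
    have htend := tendsto_measure_iInter_atTop
      (fun ℓ => (hmeasset ℓ).nullMeasurableSet) hanti ⟨0, hfin⟩
    rw [hempty, measure_empty] at htend
    exact Tendsto.congr (fun ℓ => (hTeq ℓ).symm) htend
  have hupper : Tendsto (fun ℓ => K * T ℓ) atTop (𝓝 0) := by
    have := ENNReal.Tendsto.const_mul hTtend (Or.inr hKne)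
    simpa using this
  refine tendsto_of_tendsto_of_tendsto_of_le_of_le' tendsto_const_nhds hupper
    (Eventually.of_forall fun ℓ => zero_le) ?_
  filter_upwards [eventually_ge_atTop 1] with ℓ hℓ
  exact Filter.limsup_le_of_le (by isBoundedDefault)
    (by filter_upwards [Ioc_mem_nhdsGT_of_mem ⟨le_rfl, one_pos⟩] with ε hε
        exact key ℓ hℓ ε hε)


lemma measurableSet_zcube (k : Fin d → ℤ) : MeasurableSet (zcube k) := by
  have : zcube k = ⋂ i, {x : Pt d | (k i : ℝ) ≤ x i ∧ x i < (k i : ℝ) + 1} := by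
    ext x; simp [zcube, Set.mem_iInter]
  rw [this]
  refine MeasurableSet.iInter fun i => ?_
  exact (measurableSet_le measurable_const (measurable_pi_apply i)).inter
    (measurableSet_lt (measurable_pi_apply i) measurable_const)

lemma hat_apply (ω : Cfg d S) {A : Set (Pt d)} (hA : MeasurableSet A) :
    hat ω A = ω (Prod.fst ⁻¹' A) := Measure.map_apply measurable_fst hA

lemma measurable_hat_apply {A : Set (Pt d)} (hA : MeasurableSet A) :
    Measurable fun ω : Cfg d S => hat ω A := by
  have : (fun ω : Cfg d S => hat ω A) = fun ω : Cfg d S => ω (Prod.fst ⁻¹' A) := by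
    funext ω; exact hat_apply ω hA
  rw [this]
  exact Measure.measurable_coe (measurable_fst hA)

lemma measurable_shift_pt (v : Pt d) : Measurable fun p : Pt d × S => (p.1 - v, p.2) :=
  ((measurable_fst).sub measurable_const).prodMk measurable_snd

lemma measurable_shift (v : Pt d) : Measurable (shift (S := S) v) :=
  Measure.measurable_map _ (measurable_shift_pt v)

lemma hat_shift_zcube (ω : Cfg d S) (k : Fin d → ℤ) :
    hat (shift (fun i => (k i : ℝ)) ω) (zcube 0) = hat ω (zcube k) := by
  rw [hat_apply _ (measurableSet_zcube 0), hat_apply _ (measurableSet_zcube k), shift,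
    Measure.map_apply (measurable_shift_pt _) (measurable_fst (measurableSet_zcube 0))]
  congr 1
  ext p
  simp only [Set.mem_preimage, zcube, Set.mem_setOf_eq, Pi.zero_apply, Int.cast_zero,
    Pi.sub_apply]
  constructor
  · intro h i; constructor <;> [linarith [(h i).1]; linarith [(h i).2]]
  · intro h i; constructor <;> [linarith [(h i).1]; linarith [(h i).2]]

/-- The lattice box of side `2m+1`. -/
def Kbox (d : ℕ) (m : ℕ) : Finset (Fin d → ℤ) :=
  Fintype.piFinset fun _ => Finset.Icc (-(m:ℤ)) m

lemma card_Kbox (m : ℕ) : (Kbox d m).card = (2*m+1)^d := by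
  rw [Kbox, Fintype.card_piFinset]
  have : (Finset.Icc (-(m:ℤ)) m).card = 2*m+1 := by
    rw [Int.card_Icc]; omega
  simp [this]

lemma hat_box_le (ω : Cfg d S) (m : ℕ) :
    hat ω {x : Pt d | ∀ i, |x i| ≤ (m:ℝ)} ≤ ∑ k ∈ Kbox d m, hat ω (zcube k) := by
  refine le_trans (measure_mono ?_) (measure_biUnion_finset_le _ _)
  intro x hx
  have hk : (fun i => ⌊x i⌋) ∈ Kbox d m := by
    rw [Kbox, Fintype.mem_piFinset]
    intro i
    rw [Finset.mem_Icc]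
    have h := hx i
    rw [abs_le] at h
    constructor
    · exact Int.le_floor.2 (by exact_mod_cast h.1)
    · exact Int.le_of_lt_add_one (by rw [Int.floor_lt]; push_cast; linarith [h.2])
  have hxz : x ∈ zcube (fun i => ⌊x i⌋) :=
    fun i => ⟨Int.floor_le (x i), Int.lt_floor_add_one (x i)⟩
  exact Set.mem_biUnion hk hxz
end Aux


section Prob
variable {d : ℕ} {S : Type*} [MeasurableSpace S]
variable [TopologicalSpace S] [PolishSpace S] [BorelSpace S]

lemma lintegral_shift (E : Setting d S) (v : Pt d) {F : Cfg d S → ℝ≥0∞} (hF : Measurable F) :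
    ∫⁻ ω, F (shift v ω) ∂E.P = ∫⁻ ω, F ω ∂E.P := by
  conv_rhs => rw [← E.stationary v]
  rw [lintegral_map hF (measurable_shift v)]

lemma integral_shift (E : Setting d S) (v : Pt d) {F : Cfg d S → ℝ} (hF : Measurable F) :
    ∫ ω, F (shift v ω) ∂E.P = ∫ ω, F ω ∂E.P := by
  conv_rhs => rw [← E.stationary v]
  rw [integral_map (measurable_shift v).aemeasurable
    (hF.aestronglyMeasurable (μ := E.P.map (shift v)))]

lemma lintegral_Nk (E : Setting d S) (k : Fin d → ℤ) :
    ∫⁻ ω, hat ω (zcube k) ∂E.P = ∫⁻ ω, hat ω (zcube 0) ∂E.P := by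
  rw [← lintegral_shift E (fun i => (k i : ℝ))
    (F := fun ω => hat ω (zcube (0 : Fin d → ℤ)))
    (measurable_hat_apply (measurableSet_zcube (0 : Fin d → ℤ)))]
  exact lintegral_congr fun ω => (hat_shift_zcube ω k).symm

lemma lintegral_Nk_sq (E : Setting d S) (k : Fin d → ℤ) :
    ∫⁻ ω, hat ω (zcube k) ^ 2 ∂E.P = ∫⁻ ω, hat ω (zcube 0) ^ 2 ∂E.P := by
  have hm : Measurable fun ω : Cfg d S => hat ω (zcube (0 : Fin d → ℤ)) ^ 2 := by
    have h0 := measurable_hat_apply (S := S) (measurableSet_zcube (0 : Fin d → ℤ))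
    have : (fun ω : Cfg d S => hat ω (zcube 0) ^ 2)
        = fun ω => hat ω (zcube 0) * hat ω (zcube 0) := by funext ω; ring
    rw [this]; exact h0.mul h0
  rw [← lintegral_shift E (fun i => (k i : ℝ))
    (F := fun ω => hat ω (zcube (0 : Fin d → ℤ)) ^ 2) hm]
  exact lintegral_congr fun ω => by rw [hat_shift_zcube ω k]

lemma Nk_ae_lt_top (E : Setting d S) : ∀ᵐ ω ∂E.P, ∀ k : Fin d → ℤ, hat ω (zcube k) ≠ ⊤ := by
  rw [ae_all_iff]
  intro k
  have h1 : ∫⁻ ω, hat ω (zcube k) ∂E.P ≠ ⊤ := by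
    rw [lintegral_Nk]
    refine ne_top_of_le_ne_top E.intensity_ne_top (lintegral_mono fun ω => measure_mono ?_)
    intro x hx i
    have h := hx i
    simp only [Pi.zero_apply, Int.cast_zero] at h
    exact ⟨h.1, by linarith [h.2]⟩
  filter_upwards [ae_lt_top (measurable_hat_apply (measurableSet_zcube k)) h1] with ω hω
  exact hω.ne

lemma measurable_NkR (k : Fin d → ℤ) : Measurable fun ω : Cfg d S => NkR ω k :=
  (measurable_hat_apply (measurableSet_zcube k)).ennreal_toReal

lemma memL2_NkR (E : Setting d S)
    (h2 : (∫⁻ ω, hat ω (zcube (0 : Fin d → ℤ)) ^ 2 ∂E.P) ≠ ⊤) (k : Fin d → ℤ) :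
    MemLp (fun ω => NkR ω k) 2 E.P := by
  haveI := E.isProb
  rw [memLp_two_iff_integrable_sq ((measurable_NkR k).aestronglyMeasurable)]
  refine ⟨((measurable_NkR k).pow_const 2).aestronglyMeasurable, ?_⟩
  rw [hasFiniteIntegral_iff_ofReal (Eventually.of_forall fun ω => sq_nonneg _)]
  have hb : ∀ ω : Cfg d S, ENNReal.ofReal ((NkR ω k) ^ 2) ≤ hat ω (zcube k) ^ 2 := by
    intro ω
    rw [NkR, ← ENNReal.toReal_pow]
    exact ENNReal.ofReal_toReal_le
  refine lt_of_le_of_lt (lintegral_mono hb) ?_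
  rw [lintegral_Nk_sq]
  exact h2.lt_top

lemma integrable_NkR (E : Setting d S)
    (h2 : (∫⁻ ω, hat ω (zcube (0 : Fin d → ℤ)) ^ 2 ∂E.P) ≠ ⊤) (k : Fin d → ℤ) :
    Integrable (fun ω => NkR ω k) E.P := by
  haveI := E.isProb
  exact (memL2_NkR E h2 k).integrable one_le_two

lemma NkR_nonneg (ω : Cfg d S) (k : Fin d → ℤ) : 0 ≤ NkR ω k := ENNReal.toReal_nonneg

lemma integral_NkR_eq (E : Setting d S) (k : Fin d → ℤ) :
    ∫ ω, NkR ω k ∂E.P = ∫ ω, NkR ω 0 ∂E.P := by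
  rw [← integral_shift E (fun i => (k i : ℝ))
    (F := fun ω => NkR ω (0 : Fin d → ℤ)) (measurable_NkR (0 : Fin d → ℤ))]
  refine integral_congr_ae (Eventually.of_forall fun ω => ?_)
  simp only [NkR, hat_shift_zcube ω k]

lemma integral_NkR_sq_eq (E : Setting d S) (k : Fin d → ℤ) :
    ∫ ω, (NkR ω k) ^ 2 ∂E.P = ∫ ω, (NkR ω 0) ^ 2 ∂E.P := by
  rw [← integral_shift E (fun i => (k i : ℝ))
    (F := fun ω => (NkR ω (0 : Fin d → ℤ)) ^ 2)
    ((measurable_NkR (0 : Fin d → ℤ)).pow_const 2)]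
  refine integral_congr_ae (Eventually.of_forall fun ω => ?_)
  simp only [NkR, hat_shift_zcube ω k]

lemma integrable_NkR_mul (E : Setting d S)
    (h2 : (∫⁻ ω, hat ω (zcube (0 : Fin d → ℤ)) ^ 2 ∂E.P) ≠ ⊤) (k k' : Fin d → ℤ) :
    Integrable (fun ω => NkR ω k * NkR ω k') E.P := by
  haveI := E.isProb
  have ha := (memL2_NkR E h2 k).integrable_sq
  have hb := (memL2_NkR E h2 k').integrable_sq
  refine Integrable.mono' (((ha.add hb).div_const 2))
    ((measurable_NkR k).mul (measurable_NkR k')).aestronglyMeasurable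
    (Eventually.of_forall fun ω => ?_)
  have h1 := NkR_nonneg ω k
  have h2 := NkR_nonneg ω k'
  rw [Real.norm_eq_abs, abs_of_nonneg (mul_nonneg h1 h2)]
  simp only [Pi.add_apply]
  nlinarith [sq_nonneg (NkR ω k - NkR ω k')]

lemma variance_sum_eq (E : Setting d S)
    (h2 : (∫⁻ ω, hat ω (zcube (0 : Fin d → ℤ)) ^ 2 ∂E.P) ≠ ⊤) (K : Finset (Fin d → ℤ)) :
    ProbabilityTheory.variance (fun ω => ∑ k ∈ K, NkR ω k) E.P
      = ∑ k ∈ K, ∑ k' ∈ K, covN E k k' := by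
  haveI := E.isProb
  have hS2 : MemLp (fun ω => ∑ k ∈ K, NkR ω k) 2 E.P :=
    memLp_finset_sum K fun k _ => memL2_NkR E h2 k
  rw [ProbabilityTheory.variance_eq_sub hS2]
  simp only [Pi.pow_apply]
  have hsq : ∫ ω, (∑ k ∈ K, NkR ω k) ^ 2 ∂E.P
      = ∑ k ∈ K, ∑ k' ∈ K, ∫ ω, NkR ω k * NkR ω k' ∂E.P := by
    have hpt : ∀ ω : Cfg d S, (∑ k ∈ K, NkR ω k) ^ 2
        = ∑ k ∈ K, ∑ k' ∈ K, NkR ω k * NkR ω k' := by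
      intro ω
      rw [sq, Finset.sum_mul_sum]
    rw [integral_congr_ae (Eventually.of_forall hpt)]
    rw [integral_finset_sum K fun k _ =>
      integrable_finset_sum K fun k' _ => integrable_NkR_mul E h2 k k']
    exact Finset.sum_congr rfl fun k _ =>
      integral_finset_sum K fun k' _ => integrable_NkR_mul E h2 k k'
  have hlin : ∫ ω, (∑ k ∈ K, NkR ω k) ∂E.P = ∑ k ∈ K, ∫ ω, NkR ω k ∂E.P :=
    integral_finset_sum K fun k _ => integrable_NkR E h2 k
  rw [hsq, hlin, pow_two, Finset.sum_mul_sum]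
  rw [← Finset.sum_sub_distrib]
  refine Finset.sum_congr rfl fun k _ => ?_
  rw [← Finset.sum_sub_distrib]
  rfl
end Prob


section Shell
variable {d : ℕ}

/-- The sup-norm of a lattice vector. -/
def maxn {d : ℕ} (j : Fin d → ℤ) : ℕ := Finset.univ.sup fun i => (j i).natAbs

lemma one_le_maxn {j : Fin d → ℤ} (hj : j ≠ 0) : 1 ≤ maxn j := by
  by_contra h
  push_neg at h
  apply hj
  funext i
  have h1 : (j i).natAbs ≤ maxn j := Finset.le_sup (f := fun i => (j i).natAbs) (Finset.mem_univ i)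
  have h0 : (j i).natAbs = 0 := by omega
  exact Int.natAbs_eq_zero.1 h0

lemma maxn_le_of_mem_Kbox {M : ℕ} {j : Fin d → ℤ} (h : j ∈ Kbox d M) : maxn j ≤ M := by
  refine Finset.sup_le fun i _ => ?_
  have := (Finset.mem_Icc.1 (Fintype.mem_piFinset.1 h i))
  omega

lemma maxn_cast_le_zdist (k k' : Fin d → ℤ) : ((maxn (k - k') : ℕ) : ℝ) ≤ zdist k k' := by
  rcases Finset.univ.eq_empty_or_nonempty (α := Fin d) with h | h
  · have h0 : maxn (k - k') = 0 := by rw [maxn, h, Finset.sup_empty]; rfl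
    rw [h0]
    exact_mod_cast Real.sqrt_nonneg _
  · obtain ⟨i, _, hi⟩ := Finset.exists_mem_eq_sup Finset.univ h
      fun i => ((k - k') i).natAbs
    rw [maxn, hi]
    have h1 : (((k - k') i).natAbs : ℝ) = |((k i - k' i : ℤ) : ℝ)| := by
      rw [Nat.cast_natAbs]
      simp [Pi.sub_apply]
    rw [h1, zdist, ← Real.sqrt_sq_eq_abs]
    exact Real.sqrt_le_sqrt (Finset.single_le_sum
      (f := fun i => ((k i - k' i : ℤ) : ℝ) ^ 2) (fun i _ => sq_nonneg _) (Finset.mem_univ i))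

lemma shell_card (hd : 0 < d) (M s : ℕ) :
    (((Kbox d M).erase 0).filter fun j => maxn j = s).card ≤ 2 * d * (2*s+1)^(d-1) := by
  classical
  set slab : Fin d → Finset (Fin d → ℤ) := fun i => Fintype.piFinset fun i' =>
    if i' = i then ({-(s:ℤ), (s:ℤ)} : Finset ℤ) else Finset.Icc (-(s:ℤ)) (s:ℤ) with hslab_def
  have hsub : (((Kbox d M).erase 0).filter fun j => maxn j = s) ⊆ Finset.univ.biUnion slab := by
    intro j hj
    rw [Finset.mem_filter] at hj
    obtain ⟨i, _, hi⟩ := Finset.exists_mem_eq_sup Finset.univ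
      ⟨⟨0, hd⟩, Finset.mem_univ _⟩ fun i => (j i).natAbs
    refine Finset.mem_biUnion.2 ⟨i, Finset.mem_univ _, ?_⟩
    rw [hslab_def]
    rw [Fintype.mem_piFinset]
    intro i'
    by_cases hii : i' = i
    · subst hii
      rw [if_pos rfl]
      have hval : (j i').natAbs = s := by rw [← hj.2, maxn, hi]
      rcases Int.natAbs_eq_iff.1 hval with h | h
      · simp [h]
      · simp [h]
    · rw [if_neg hii, Finset.mem_Icc]
      have hle : (j i').natAbs ≤ maxn j := Finset.le_sup (f := fun i => (j i).natAbs) (Finset.mem_univ i')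
      rw [hj.2] at hle
      omega
  refine le_trans (Finset.card_le_card hsub) (le_trans Finset.card_biUnion_le ?_)
  have hslab : ∀ i : Fin d, (slab i).card ≤ 2 * (2*s+1)^(d-1) := by
    intro i
    rw [hslab_def]
    simp only
    rw [Fintype.card_piFinset]
    rw [← Finset.mul_prod_erase Finset.univ _ (Finset.mem_univ i), if_pos rfl]
    have h1 : ({-(s:ℤ), (s:ℤ)} : Finset ℤ).card ≤ 2 :=
      le_trans (Finset.card_insert_le _ _) (by simp)
    have h2 : ∏ i' ∈ Finset.univ.erase i,
        (if i' = i then ({-(s:ℤ), (s:ℤ)} : Finset ℤ) else Finset.Icc (-(s:ℤ)) (s:ℤ)).card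
        = (2*s+1)^(d-1) := by
      rw [Finset.prod_congr rfl (fun i' hi' => by
        rw [if_neg (Finset.ne_of_mem_erase hi')])]
      rw [Finset.prod_const]
      congr 1
      · rw [Int.card_Icc]; omega
      · rw [Finset.card_erase_of_mem (Finset.mem_univ i), Finset.card_univ, Fintype.card_fin]
    rw [h2]
    exact Nat.mul_le_mul_right _ h1
  calc ∑ i : Fin d, (slab i).card ≤ ∑ _i : Fin d, 2 * (2*s+1)^(d-1) :=
        Finset.sum_le_sum fun i _ => hslab i
    _ = 2 * d * (2*s+1)^(d-1) := by
        rw [Finset.sum_const, Finset.card_univ, Fintype.card_fin, smul_eq_mul]; ring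

lemma sum_over_box (hd : 0 < d) (M : ℕ) (F : (Fin d → ℤ) → ℝ) (w : ℕ → ℝ)
    (hw0 : ∀ s, 0 ≤ w s)
    (hF : ∀ j ∈ (Kbox d M).erase 0, F j ≤ w (maxn j)) :
    ∑ j ∈ (Kbox d M).erase 0, F j
      ≤ ∑ s ∈ Finset.Icc 1 M, ((2 * d * (2*s+1)^(d-1) : ℕ) : ℝ) * w s := by
  have hmaps : ∀ j ∈ (Kbox d M).erase 0, maxn j ∈ Finset.Icc 1 M := by
    intro j hj
    rw [Finset.mem_erase] at hj
    exact Finset.mem_Icc.2 ⟨one_le_maxn hj.1, maxn_le_of_mem_Kbox hj.2⟩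
  calc ∑ j ∈ (Kbox d M).erase 0, F j ≤ ∑ j ∈ (Kbox d M).erase 0, w (maxn j) :=
        Finset.sum_le_sum hF
    _ = ∑ s ∈ Finset.Icc 1 M, ∑ j ∈ ((Kbox d M).erase 0).filter fun j => maxn j = s,
          w (maxn j) := (Finset.sum_fiberwise_of_maps_to hmaps _).symm
    _ ≤ ∑ s ∈ Finset.Icc 1 M, ((2 * d * (2*s+1)^(d-1) : ℕ) : ℝ) * w s := by
        refine Finset.sum_le_sum fun s _ => ?_
        have : ∑ j ∈ ((Kbox d M).erase 0).filter (fun j => maxn j = s), w (maxn j)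
            = ∑ _j ∈ ((Kbox d M).erase 0).filter (fun j => maxn j = s), w s := by
          refine Finset.sum_congr rfl fun j hj => ?_
          rw [(Finset.mem_filter.1 hj).2]
        rw [this, Finset.sum_const, nsmul_eq_mul]
        refine mul_le_mul_of_nonneg_right ?_ (hw0 s)
        exact_mod_cast shell_card hd M s
end Shell


section Main
variable {d : ℕ} {S : Type*} [MeasurableSpace S]
variable [TopologicalSpace S] [PolishSpace S] [BorelSpace S]

lemma condI_box (E : Setting d S) (hI : CondI E) :
    ∀ᵐ ω ∂E.P, ∃ C : ℝ, 0 ≤ C ∧ ∀ n : ℕ,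
      hat ω {x : Pt d | ∀ i, |x i| ≤ ((2^n : ℕ) : ℝ)}
        ≤ ENNReal.ofReal (C * ((2^n : ℕ) : ℝ) ^ d) := by
  filter_upwards [hI] with ω hω
  obtain ⟨Cb, hCbne, hCb⟩ := hω
  refine ⟨3^d * Cb.toReal, by positivity, fun n => ?_⟩
  have h2n : (1:ℝ) ≤ ((2^n:ℕ):ℝ) := by
    exact_mod_cast Nat.one_le_two_pow
  calc hat ω {x : Pt d | ∀ i, |x i| ≤ ((2^n:ℕ):ℝ)}
      ≤ ∑ k ∈ Kbox d (2^n), hat ω (zcube k) := hat_box_le ω _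
    _ ≤ ∑ _k ∈ Kbox d (2^n), Cb := Finset.sum_le_sum fun k _ => hCb k
    _ = ((Kbox d (2^n)).card : ℝ≥0∞) * Cb := by rw [Finset.sum_const, nsmul_eq_mul]
    _ ≤ ENNReal.ofReal (3^d * Cb.toReal * ((2^n:ℕ):ℝ)^d) := ?_
  have hCb_eq : Cb = ENNReal.ofReal Cb.toReal := (ENNReal.ofReal_toReal hCbne).symm
  rw [card_Kbox]
  conv_lhs => rw [hCb_eq, ← ENNReal.ofReal_natCast ((2*2^n+1)^d)]
  rw [← ENNReal.ofReal_mul (by positivity)]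
  apply ENNReal.ofReal_le_ofReal
  have h1 : ((2*2^n+1:ℕ):ℝ) ≤ 3*((2^n:ℕ):ℝ) := by
    have h2 : (1:ℝ) ≤ (2:ℝ)^n := one_le_pow₀ (by norm_num)
    push_cast
    linarith
  calc (((2*2^n+1)^d : ℕ):ℝ) * Cb.toReal ≤ (3*((2^n:ℕ):ℝ))^d * Cb.toReal := by
        push_cast
        have h0 : (0:ℝ) ≤ 2*((2:ℝ)^n)+1 := by positivity
        refine mul_le_mul_of_nonneg_right (pow_le_pow_left₀ h0 ?_ d) ENNReal.toReal_nonneg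
        push_cast at h1 ⊢
        linarith
    _ = 3^d * Cb.toReal * ((2^n:ℕ):ℝ)^d := by rw [mul_pow]; ring

lemma condII_box (E : Setting d S) (hd : 0 < d) (hII : CondII E) :
    ∀ᵐ ω ∂E.P, ∃ C : ℝ, 0 ≤ C ∧ ∀ n : ℕ,
      hat ω {x : Pt d | ∀ i, |x i| ≤ ((2^n : ℕ) : ℝ)}
        ≤ ENNReal.ofReal (C * ((2^n : ℕ) : ℝ) ^ d) := by
  haveI := E.isProb
  obtain ⟨h2, C₀, hC₀, α, hα, hcov⟩ := hII
  set m₁ : ℝ := ∫ ω, NkR ω 0 ∂E.P with hm₁_def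
  set v₂ : ℝ := ∫ ω, (NkR ω 0)^2 ∂E.P with hv₂_def
  have hm₁0 : 0 ≤ m₁ := integral_nonneg fun ω => NkR_nonneg ω 0
  have hv₂0 : 0 ≤ v₂ := integral_nonneg fun ω => sq_nonneg _
  -- weight function dominating covariances
  set w : ℕ → ℝ := fun s => if 2 ≤ d then C₀ / s else C₀ * (s:ℝ) ^ (-(1+α)) with hw_def
  have hw0 : ∀ s : ℕ, 0 ≤ w s := by
    intro s; rw [hw_def]; dsimp only
    split
    · positivity
    · positivity
  have hcovw : ∀ k k' : Fin d → ℤ, k' ≠ k → covN E k k' ≤ w (maxn (k - k')) := by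
    intro k k' hne
    have hm1 : 1 ≤ maxn (k - k') := one_le_maxn (sub_ne_zero.2 (Ne.symm hne))
    have hm1R : (1:ℝ) ≤ (maxn (k - k') : ℝ) := by exact_mod_cast hm1
    have hmz : ((maxn (k - k') : ℕ) : ℝ) ≤ zdist k k' := maxn_cast_le_zdist k k'
    have hz1 : (1:ℝ) ≤ zdist k k' := le_trans hm1R hmz
    have hcv := hcov k k' (fun h => hne h.symm)
    rw [hw_def]; dsimp only
    by_cases hd2 : 2 ≤ d
    · rw [if_pos hd2] at hcv ⊢
      refine le_trans hcv ?_
      gcongr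
    · rw [if_neg hd2] at hcv ⊢
      refine le_trans hcv ?_
      have hz0 : (0:ℝ) < (maxn (k - k') : ℝ) := by linarith
      refine mul_le_mul_of_nonneg_left ?_ hC₀
      exact Real.rpow_le_rpow_of_nonpos hz0 hmz (by
        have hα1 : 0 < α := hα (by omega)
        linarith)
  -- bound on the off-diagonal sums
  have hoff : ∃ c₂ : ℝ, 0 ≤ c₂ ∧ ∀ n : ℕ,
      (∑ s ∈ Finset.Icc 1 (2^(n+1)), ((2 * d * (2*s+1)^(d-1) : ℕ) : ℝ) * w s)
        ≤ c₂ * ((2:ℝ)^n)^(d-1) := by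
    by_cases hd2 : 2 ≤ d
    · refine ⟨2*d*3^(d-1)*C₀*2^(d-1), by positivity, fun n => ?_⟩
      have hterm : ∀ s ∈ Finset.Icc 1 (2^(n+1)), ((2 * d * (2*s+1)^(d-1) : ℕ) : ℝ) * w s
          ≤ (2*d*3^(d-1)*C₀ : ℝ) * ((2^(n+1):ℕ):ℝ)^(d-2) := by
        intro s hs
        rw [Finset.mem_Icc] at hs
        have hs1R : (1:ℝ) ≤ (s:ℝ) := by exact_mod_cast hs.1
        have hsM : (s:ℝ) ≤ ((2^(n+1):ℕ):ℝ) := by exact_mod_cast hs.2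
        rw [hw_def]; dsimp only; rw [if_pos hd2]
        have hsplit : (s:ℝ)^(d-1) = (s:ℝ)^(d-2) * s := by
          rw [← pow_succ]; congr 1; omega
        have hs0 : (0:ℝ) < (s:ℝ) := by linarith
        calc ((2 * d * (2*s+1)^(d-1) : ℕ) : ℝ) * (C₀ / s)
            ≤ (2*(d:ℝ)*(3*(s:ℝ))^(d-1)) * (C₀ / s) := by
              refine mul_le_mul_of_nonneg_right ?_ (by positivity)
              push_cast
              refine mul_le_mul_of_nonneg_left (pow_le_pow_left₀ (by positivity) ?_ _)
                (by positivity)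
              linarith
          _ = (2*(d:ℝ)*3^(d-1)*C₀) * ((s:ℝ)^(d-2)) := by
              rw [mul_pow, hsplit]
              field_simp
          _ ≤ (2*(d:ℝ)*3^(d-1)*C₀) * ((2^(n+1):ℕ):ℝ)^(d-2) := by
              refine mul_le_mul_of_nonneg_left (pow_le_pow_left₀ (by positivity) hsM _)
                (by positivity)
      calc (∑ s ∈ Finset.Icc 1 (2^(n+1)), ((2 * d * (2*s+1)^(d-1) : ℕ) : ℝ) * w s)
          ≤ ∑ _s ∈ Finset.Icc 1 (2^(n+1)), (2*(d:ℝ)*3^(d-1)*C₀) * ((2^(n+1):ℕ):ℝ)^(d-2) :=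
            Finset.sum_le_sum hterm
        _ = ((2^(n+1):ℕ):ℝ) * ((2*(d:ℝ)*3^(d-1)*C₀) * ((2^(n+1):ℕ):ℝ)^(d-2)) := by
            rw [Finset.sum_const, nsmul_eq_mul, Nat.card_Icc]
            norm_num
        _ = (2*(d:ℝ)*3^(d-1)*C₀) * ((2^(n+1):ℕ):ℝ)^(d-1) := by
            have hsplit : ((2^(n+1):ℕ):ℝ)^(d-1) = ((2^(n+1):ℕ):ℝ)^(d-2) * ((2^(n+1):ℕ):ℝ) := by
              rw [← pow_succ]; congr 1; omega
            rw [hsplit]; ring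
        _ = (2*(d:ℝ)*3^(d-1)*C₀*2^(d-1)) * ((2:ℝ)^n)^(d-1) := by
            have : ((2^(n+1):ℕ):ℝ) = 2 * (2:ℝ)^n := by push_cast; ring
            rw [this, mul_pow]; ring
    · -- d = 1
      have hd1 : d = 1 := by omega
      have hα1 : 0 < α := hα hd1
      have hsum : Summable (fun n : ℕ => 1 / (n:ℝ) ^ (1+α)) :=
        Real.summable_one_div_nat_rpow.2 (by linarith)
      set Z : ℝ := ∑' n : ℕ, 1 / (n:ℝ) ^ (1+α) with hZ_def
      have hZ0 : 0 ≤ Z := tsum_nonneg fun n => by positivity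
      refine ⟨2*C₀*Z, by positivity, fun n => ?_⟩
      have hpow0 : ((2:ℝ)^n)^(d-1) = 1 := by rw [hd1]; norm_num
      rw [hpow0, mul_one]
      have hterm : ∀ s ∈ Finset.Icc 1 (2^(n+1)), ((2 * d * (2*s+1)^(d-1) : ℕ) : ℝ) * w s
          = 2*C₀ * (1 / (s:ℝ) ^ (1+α)) := by
        intro s hs
        rw [Finset.mem_Icc] at hs
        have hs0 : (0:ℝ) ≤ (s:ℝ) := Nat.cast_nonneg s
        rw [hw_def]; dsimp only; rw [if_neg (by omega)]
        have hc : ((2 * d * (2*s+1)^(d-1) : ℕ) : ℝ) = 2 := by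
          rw [hd1]; norm_num
        rw [hc, Real.rpow_neg hs0]
        rw [one_div]
        ring
      rw [Finset.sum_congr rfl hterm, ← Finset.mul_sum]
      refine mul_le_mul_of_nonneg_left ?_ (by positivity : (0:ℝ) ≤ 2*C₀)
      exact Summable.sum_le_tsum _ (fun i _ => by positivity) hsum
  obtain ⟨c₂, hc₂0, hc₂⟩ := hoff
  -- variance bound
  set A : ℝ := 3^d * v₂ + 3^d * c₂ with hA_def
  have hA0 : 0 ≤ A := by positivity
  have hcard : ∀ n : ℕ, ((Kbox d (2^n)).card : ℝ) ≤ 3^d * ((2:ℝ)^n)^d := by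
    intro n
    rw [card_Kbox]
    have h1 : ((2*2^n+1:ℕ):ℝ) ≤ 3*((2:ℝ)^n) := by
      push_cast
      have : (1:ℝ) ≤ (2:ℝ)^n := one_le_pow₀ (by norm_num)
      linarith
    calc (((2*2^n+1)^d : ℕ):ℝ) = ((2*2^n+1:ℕ):ℝ)^d := by push_cast; ring
      _ ≤ (3*((2:ℝ)^n))^d := pow_le_pow_left₀ (by positivity) h1 d
      _ = 3^d * ((2:ℝ)^n)^d := mul_pow _ _ _
  have hVar : ∀ n : ℕ, ∑ k ∈ Kbox d (2^n), ∑ k' ∈ Kbox d (2^n), covN E k k'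
      ≤ A * ((2:ℝ)^n)^(2*d-1) := by
    intro n
    have hdiag : ∀ k : Fin d → ℤ, covN E k k ≤ v₂ := by
      intro k
      rw [covN]
      have he : ∫ ω, NkR ω k * NkR ω k ∂E.P = v₂ := by
        rw [hv₂_def, ← integral_NkR_sq_eq E k]
        refine integral_congr_ae (Eventually.of_forall fun ω => ?_)
        show NkR ω k * NkR ω k = NkR ω k ^ 2
        rw [pow_two]
      rw [he]
      nlinarith [sq_nonneg (∫ ω, NkR ω k ∂E.P)]
    have hoffk : ∀ k ∈ Kbox d (2^n), ∑ k' ∈ (Kbox d (2^n)).erase k, covN E k k'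
        ≤ c₂ * ((2:ℝ)^n)^(d-1) := by
      intro k hk
      have hsub : ((Kbox d (2^n)).erase k).image (fun k' => k - k')
          ⊆ (Kbox d (2^(n+1))).erase 0 := by
        intro j hj
        rw [Finset.mem_image] at hj
        obtain ⟨k', hk', rfl⟩ := hj
        rw [Finset.mem_erase] at hk' ⊢
        constructor
        · exact sub_ne_zero.2 (Ne.symm hk'.1)
        · rw [Kbox, Fintype.mem_piFinset]
          intro i
          have h1 := Finset.mem_Icc.1 (Fintype.mem_piFinset.1 hk i)
          have h2 := Finset.mem_Icc.1 (Fintype.mem_piFinset.1 hk'.2 i)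
          rw [Finset.mem_Icc, Pi.sub_apply]
          have hcast : ((2^(n+1):ℕ):ℤ) = 2 * ((2^n:ℕ):ℤ) := by push_cast; ring
          omega
      have hinj : Set.InjOn (fun k' => k - k') ((Kbox d (2^n)).erase k) :=
        fun a _ b _ h => sub_right_injective h
      calc ∑ k' ∈ (Kbox d (2^n)).erase k, covN E k k'
          ≤ ∑ k' ∈ (Kbox d (2^n)).erase k, w (maxn (k - k')) :=
            Finset.sum_le_sum fun k' hk' =>
              hcovw k k' (Finset.ne_of_mem_erase hk')
        _ = ∑ j ∈ ((Kbox d (2^n)).erase k).image (fun k' => k - k'), w (maxn j) :=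
            (Finset.sum_image (f := fun j => w (maxn j)) (g := fun k' => k - k')
              fun a ha b hb h => hinj ha hb h).symm
        _ ≤ ∑ j ∈ (Kbox d (2^(n+1))).erase 0, w (maxn j) :=
            Finset.sum_le_sum_of_subset_of_nonneg hsub fun j _ _ => hw0 _
        _ ≤ ∑ s ∈ Finset.Icc 1 (2^(n+1)), ((2 * d * (2*s+1)^(d-1) : ℕ) : ℝ) * w s :=
            sum_over_box hd _ _ w hw0 fun j _ => le_rfl
        _ ≤ c₂ * ((2:ℝ)^n)^(d-1) := hc₂ n
    calc ∑ k ∈ Kbox d (2^n), ∑ k' ∈ Kbox d (2^n), covN E k k'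
        = ∑ k ∈ Kbox d (2^n), (∑ k' ∈ (Kbox d (2^n)).erase k, covN E k k' + covN E k k) := by
          refine Finset.sum_congr rfl fun k hk => ?_
          rw [Finset.sum_erase_add _ _ hk]
      _ ≤ ∑ _k ∈ Kbox d (2^n), (c₂ * ((2:ℝ)^n)^(d-1) + v₂) :=
          Finset.sum_le_sum fun k hk => add_le_add (hoffk k hk) (hdiag k)
      _ = ((Kbox d (2^n)).card : ℝ) * (c₂ * ((2:ℝ)^n)^(d-1) + v₂) := by
          rw [Finset.sum_const, nsmul_eq_mul]
      _ ≤ (3^d * ((2:ℝ)^n)^d) * (c₂ * ((2:ℝ)^n)^(d-1) + v₂) := by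
          refine mul_le_mul_of_nonneg_right (hcard n) ?_
          positivity
      _ ≤ A * ((2:ℝ)^n)^(2*d-1) := by
          rw [hA_def]
          have h2n1 : (1:ℝ) ≤ (2:ℝ)^n := one_le_pow₀ (by norm_num)
          have hp1 : ((2:ℝ)^n)^d * ((2:ℝ)^n)^(d-1) = ((2:ℝ)^n)^(2*d-1) := by
            rw [← pow_add]; congr 1; omega
          have hp2 : ((2:ℝ)^n)^d ≤ ((2:ℝ)^n)^(2*d-1) :=
            pow_le_pow_right₀ h2n1 (by omega)
          have e1 : (3^d * ((2:ℝ)^n)^d) * (c₂ * ((2:ℝ)^n)^(d-1) + v₂)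
              = 3^d * c₂ * (((2:ℝ)^n)^d * ((2:ℝ)^n)^(d-1)) + 3^d * v₂ * ((2:ℝ)^n)^d := by
            ring
          rw [e1, hp1]
          have e2 : 3^d * v₂ * ((2:ℝ)^n)^d ≤ 3^d * v₂ * ((2:ℝ)^n)^(2*d-1) := by
            refine mul_le_mul_of_nonneg_left hp2 (by positivity)
          linarith
  -- Chebyshev and Borel--Cantelli
  set Sn : ℕ → Cfg d S → ℝ := fun n ω => ∑ k ∈ Kbox d (2^n), NkR ω k with hSn_def
  set Bset : ℕ → Set (Cfg d S) := fun n =>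
    {ω | ((2:ℝ)^n)^d ≤ |Sn n ω - ∫ ω', Sn n ω' ∂E.P|} with hB_def
  have hcheb : ∀ n : ℕ, E.P (Bset n) ≤ ENNReal.ofReal (A * (1/2)^n) := by
    intro n
    have hS2 : MemLp (Sn n) 2 E.P :=
      memLp_finset_sum (Kbox d (2^n)) fun k _ => memL2_NkR E h2 k
    have hc0 : (0:ℝ) < ((2:ℝ)^n)^d := by positivity
    refine le_trans (ProbabilityTheory.meas_ge_le_variance_div_sq hS2 hc0)
      (ENNReal.ofReal_le_ofReal ?_)
    rw [hSn_def]
    rw [variance_sum_eq E h2 (Kbox d (2^n))]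
    rw [div_le_iff₀ (by positivity)]
    have hone : ((1:ℝ)/2)^n * 2^n = 1 := by
      rw [← mul_pow]; norm_num
    have hc2e : (((2:ℝ)^n)^d)^2 = ((2:ℝ)^n)^(2*d-1) * (2:ℝ)^n := by
      rw [← pow_mul, ← pow_succ]
      congr 1
      omega
    calc ∑ k ∈ Kbox d (2^n), ∑ k' ∈ Kbox d (2^n), covN E k k'
        ≤ A * ((2:ℝ)^n)^(2*d-1) := hVar n
      _ = A * (1/2)^n * (((2:ℝ)^n)^d)^2 := by
          rw [hc2e]
          calc A * ((2:ℝ)^n)^(2*d-1)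
              = A * (1/2)^n * (((2:ℝ)^n)^(2*d-1) * (2:ℝ)^n) := by
                rw [show A * (1/2)^n * (((2:ℝ)^n)^(2*d-1) * (2:ℝ)^n)
                  = A * ((2:ℝ)^n)^(2*d-1) * ((1/2)^n * 2^n) from by ring, hone, mul_one]
            _ = A * (1/2)^n * (((2:ℝ)^n)^(2*d-1) * (2:ℝ)^n) := rfl
  have hsum_ne : (∑' n, E.P (Bset n)) ≠ ⊤ := by
    refine ne_top_of_le_ne_top ?_ (ENNReal.tsum_le_tsum hcheb)
    have heq : ∀ n : ℕ, ENNReal.ofReal (A * (1/2)^n)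
        = ENNReal.ofReal A * (ENNReal.ofReal (1/2))^n := by
      intro n
      rw [ENNReal.ofReal_mul hA0, ENNReal.ofReal_pow (by norm_num)]
    rw [tsum_congr heq, ENNReal.tsum_mul_left, ENNReal.tsum_geometric]
    refine ENNReal.mul_ne_top ENNReal.ofReal_ne_top (ENNReal.inv_ne_top.2 ?_)
    rw [Ne, tsub_eq_zero_iff_le]
    exact fun h => absurd (lt_of_lt_of_le (ENNReal.ofReal_lt_one.2 (by norm_num)) h) (lt_irrefl _).elim
  have hae := MeasureTheory.ae_eventually_notMem hsum_ne
  -- expectation bound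
  have hES : ∀ n : ℕ, ∫ ω, Sn n ω ∂E.P = ((Kbox d (2^n)).card : ℝ) * m₁ := by
    intro n
    rw [hSn_def]
    rw [integral_finset_sum _ fun k _ => integrable_NkR E h2 k]
    rw [Finset.sum_congr rfl fun k _ => integral_NkR_eq E k]
    rw [Finset.sum_const, nsmul_eq_mul]
  filter_upwards [hae, Nk_ae_lt_top E] with ω hev hfin
  obtain ⟨n₀, hn₀⟩ := Filter.eventually_atTop.1 hev
  have hSnn : ∀ n, 0 ≤ Sn n ω := fun n => Finset.sum_nonneg fun k _ => NkR_nonneg ω k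
  set C : ℝ := (3^d * m₁ + 1) + ∑ n ∈ Finset.range n₀, Sn n ω with hC_def
  have hC0 : 0 ≤ C := by
    have := Finset.sum_nonneg (fun n (_ : n ∈ Finset.range n₀) => hSnn n)
    positivity
  refine ⟨C, hC0, fun n => ?_⟩
  have h2nR : ((2^n:ℕ):ℝ) = (2:ℝ)^n := by push_cast; ring
  have hpow1 : (1:ℝ) ≤ ((2^n:ℕ):ℝ)^d := by
    rw [h2nR]
    exact one_le_pow₀ (one_le_pow₀ (by norm_num))
  have hhat : hat ω {x : Pt d | ∀ i, |x i| ≤ ((2^n:ℕ):ℝ)} ≤ ENNReal.ofReal (Sn n ω) := by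
    refine le_trans (hat_box_le ω _) ?_
    rw [hSn_def]
    rw [ENNReal.ofReal_sum_of_nonneg fun k _ => NkR_nonneg ω k]
    refine le_of_eq (Finset.sum_congr rfl fun k _ => ?_)
    rw [NkR, ENNReal.ofReal_toReal (hfin k)]
  rcases lt_or_ge n n₀ with hn | hn
  · refine le_trans hhat (ENNReal.ofReal_le_ofReal ?_)
    have hle : Sn n ω ≤ ∑ n' ∈ Finset.range n₀, Sn n' ω :=
      Finset.single_le_sum (fun n' _ => hSnn n') (Finset.mem_range.2 hn)
    have hleC : Sn n ω ≤ C := by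
      rw [hC_def]
      have : 0 ≤ 3^d * m₁ + 1 := by positivity
      linarith
    calc Sn n ω ≤ C := hleC
      _ = C * 1 := (mul_one C).symm
      _ ≤ C * ((2^n:ℕ):ℝ)^d := mul_le_mul_of_nonneg_left hpow1 hC0
  · refine le_trans hhat (ENNReal.ofReal_le_ofReal ?_)
    have hnot := hn₀ n hn
    rw [hB_def] at hnot
    simp only [Set.mem_setOf_eq, not_le] at hnot
    have habs : Sn n ω - ∫ ω', Sn n ω' ∂E.P < ((2:ℝ)^n)^d :=
      lt_of_le_of_lt (le_abs_self _) hnot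
    have hEb : ∫ ω', Sn n ω' ∂E.P ≤ 3^d * m₁ * ((2:ℝ)^n)^d := by
      rw [hES n]
      calc ((Kbox d (2^n)).card : ℝ) * m₁ ≤ (3^d * ((2:ℝ)^n)^d) * m₁ :=
            mul_le_mul_of_nonneg_right (hcard n) hm₁0
        _ = 3^d * m₁ * ((2:ℝ)^n)^d := by ring
    have hCge : 3^d * m₁ + 1 ≤ C := by
      rw [hC_def]
      have := Finset.sum_nonneg (fun n' (_ : n' ∈ Finset.range n₀) => hSnn n')
      linarith
    rw [h2nR]
    have hfinal : Sn n ω ≤ (3^d * m₁ + 1) * ((2:ℝ)^n)^d := by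
      have h1 : (1:ℝ) ≤ ((2:ℝ)^n)^d := one_le_pow₀ (one_le_pow₀ (by norm_num))
      nlinarith
    refine le_trans hfinal (mul_le_mul_of_nonneg_right hCge (by positivity))

lemma balls_of_boxes {ν : Measure (Pt d)} {C : ℝ} (hC0 : 0 ≤ C)
    (hbox : ∀ n : ℕ, ν {x : Pt d | ∀ i, |x i| ≤ ((2^n:ℕ):ℝ)}
      ≤ ENNReal.ofReal (C * ((2^n:ℕ):ℝ)^d)) :
    ∀ R : ℝ, 1 ≤ R → ν {x : Pt d | ptNorm x ≤ R} ≤ ENNReal.ofReal ((C * 4^d) * R^d) := by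
  intro R hR
  have hR0 : (0:ℝ) ≤ R := by linarith
  set N := ⌈R⌉₊ with hN
  have hN1 : 1 ≤ N := Nat.one_le_ceil_iff.2 (by linarith)
  set n := Nat.log 2 N + 1 with hn
  have hup : R ≤ ((2^n:ℕ):ℝ) := by
    have h1 : (N:ℝ) ≤ ((2^n:ℕ):ℝ) := by
      exact_mod_cast (Nat.lt_pow_succ_log_self (by norm_num) N).le
    exact le_trans (Nat.le_ceil R) h1
  have hdown : ((2^n:ℕ):ℝ) ≤ 4*R := by
    have h1 : (2^n : ℕ) ≤ 2*N := by
      rw [hn, pow_succ]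
      have := Nat.pow_log_le_self 2 (show N ≠ 0 by omega)
      omega
    have h2 : (N:ℝ) < R + 1 := Nat.ceil_lt_add_one hR0
    have h3 : ((2^n:ℕ):ℝ) ≤ 2*(N:ℝ) := by exact_mod_cast h1
    linarith
  refine le_trans (measure_mono ?_) (le_trans (hbox n) (ENNReal.ofReal_le_ofReal ?_))
  · intro x hx i
    exact le_trans (le_trans (abs_coord_le_ptNorm x i) hx) hup
  · have h4 : ((2^n:ℕ):ℝ)^d ≤ (4*R)^d := by
      apply pow_le_pow_left₀ (by positivity) hdown
    calc C * ((2^n:ℕ):ℝ)^d ≤ C * (4*R)^d := mul_le_mul_of_nonneg_left h4 hC0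
      _ = C * 4^d * R^d := by rw [mul_pow]; ring
end Main


/-- **Lemma 14.2 (tightness estimate).** Assume condition (i) (a.s. uniformly bounded
cube counts) or condition (ii) (`E[N₀²] < ∞` and polynomially decaying covariances).
Let `ψ : [0,∞) → [0,∞)` be weakly decreasing with `x ↦ ψ(|x|)` (Riemann) integrable on
`ℝ^d`. Then `P`-a.s., `lim_{ℓ→∞} limsup_{ε↓0} ∫ dμ^ε_ω(x) ψ(|x|) 1_{|x| ≥ ℓ} = 0`. -/
theorem statement19
    {d : ℕ} {S : Type*} [MeasurableSpace S] [TopologicalSpace S] [PolishSpace S] [BorelSpace S]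
    (E : Setting d S) (hcond : CondI E ∨ CondII E)
    (ψ : ℝ → ℝ) (hψ0 : ∀ r, 0 ≤ ψ r) (hψa : ∀ a b : ℝ, 0 ≤ a → a ≤ b → ψ b ≤ ψ a)
    (hψi : Integrable (fun x : Pt d => ψ (ptNorm x)) (volume : Measure (Pt d))) :
    ∀ᵐ ω ∂E.P,
      Tendsto (fun ℓ : ℕ =>
          Filter.limsup (fun ε => ∫⁻ x in {x : Pt d | (ℓ : ℝ) ≤ ptNorm x},
            ENNReal.ofReal (ψ (ptNorm x)) ∂muEps ω ε) (𝓝[>] (0 : ℝ)))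
        atTop (𝓝 (0 : ℝ≥0∞)) := by
  rcases Nat.eq_zero_or_pos d with hd0 | hd
  · subst hd0
    refine Eventually.of_forall fun ω => ?_
    refine tendsto_atTop_of_eventually_const (i₀ := 1) fun ℓ hℓ => ?_
    have hset : {x : Pt 0 | (ℓ:ℝ) ≤ ptNorm x} = ∅ := by
      ext x
      simp only [Set.mem_setOf_eq, Set.mem_empty_iff_false, iff_false, not_le]
      have h0 : ptNorm x = 0 := by
        simp [ptNorm]
      rw [h0]
      have : (1:ℝ) ≤ (ℓ:ℝ) := by exact_mod_cast hℓ
      linarith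
    simp only [hset, Measure.restrict_empty, lintegral_zero_measure]
    exact limsup_const 0
  · have hbox : ∀ᵐ ω ∂E.P, ∃ C : ℝ, 0 ≤ C ∧ ∀ n : ℕ,
        hat ω {x : Pt d | ∀ i, |x i| ≤ ((2^n : ℕ) : ℝ)}
          ≤ ENNReal.ofReal (C * ((2^n : ℕ) : ℝ) ^ d) := by
      rcases hcond with h | h
      · exact condI_box E h
      · exact condII_box E hd h
    filter_upwards [hbox] with ω hω
    obtain ⟨C, hC0, hC⟩ := hω
    have hball := balls_of_boxes hC0 hC
    exact lemmaA hd (hat ω) (by positivity) hball ψ hψ0 hψa hψi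

end RWMPP
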